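/- arXiv:2311.15827 — 3 statements merged into one kernel-verified Lean document; each statement's English description precedes it below -/
import Mathlib

section
/- If M and N are symmetric positive semidefinite m×m real matrices with N ⪯ M (i.e., M − N positive semidefinite), then logdet(I_m + M) − logdet(I_m + N) ≤ logdet(I_m + M − N). -/
/-!
Write `M = (1 + N) + D` with `A = 1 + N ≥ 1` and `D = M - N ≥ 0`, and `D = W²` with `W = √D`.
By Sylvester's determinant identity `det (A + W²) = det A · det (1 + W A⁻¹ W)`, and `A⁻¹ ≤ 1` gives
`W A⁻¹ W ≤ D`. Since the determinant is monotone on positive semidefinite matrices for the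
Loewner order, `det (1 + M) ≤ det (1 + N) · det (1 + (M - N))`; now take logarithms.
-/

open Matrix
open scoped MatrixOrder

namespace Matrix

variable {n : Type*} [Fintype n] [DecidableEq n]

lemma det_le_one {Z : Matrix n n ℝ} (h0 : 0 ≤ Z) (h1 : Z ≤ 1) : Z.det ≤ 1 := by
  have hZ : Z.PosSemidef := nonneg_iff_posSemidef.mp h0
  rw [hZ.isHermitian.det_eq_prod_eigenvalues]
  refine Finset.prod_le_one (fun i _ => hZ.eigenvalues_nonneg i) fun i _ => ?_
  exact (CFC.le_one_iff Z).mp h1 _ (hZ.isHermitian.eigenvalues_mem_spectrum_real i)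

/-- Conjugating by `S⁻¹`, where `S = √B`, reduces to `det_le_one`. -/
lemma det_le_det {B C : Matrix n n ℝ} (hB : B.PosDef) (hC : 0 ≤ C) (h : C ≤ B) :
    C.det ≤ B.det := by
  set S := CFC.sqrt B
  have hSS : S * S = B := CFC.sqrt_mul_sqrt_self B hB.posSemidef.nonneg
  have hS : IsUnit S.det :=
    (isUnit_iff_isUnit_det S).mp (isUnit_of_mul_isUnit_left (hSS ▸ hB.isUnit))
  have hT : IsSelfAdjoint S⁻¹ := (CFC.sqrt_nonneg B).isSelfAdjoint.isHermitian.inv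
  set Z := S⁻¹ * C * S⁻¹ with hZ
  have hZ0 : 0 ≤ Z := hT.conjugate_nonneg hC
  have hZ1 : Z ≤ 1 := calc
    Z ≤ S⁻¹ * B * S⁻¹ := hT.conjugate_le_conjugate h
    _ = 1 := by rw [← hSS, ← mul_assoc, nonsing_inv_mul _ hS, one_mul, mul_nonsing_inv _ hS]
  clear_value Z
  have hC : C = S * Z * S := by
    rw [hZ, mul_assoc, nonsing_inv_mul_cancel_right _ _ hS, mul_nonsing_inv_cancel_left _ _ hS]
  have hdet : C.det = B.det * Z.det := by
    rw [hC, ← hSS, det_mul, det_mul, det_mul]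
    ring
  rw [hdet]
  exact mul_le_of_le_one_right hB.det_pos.le (det_le_one hZ0 hZ1)

lemma inv_le_one {A : Matrix n n ℝ} (h : 1 ≤ A) : A⁻¹ ≤ 1 := by
  have hA : A.PosDef := by simpa using PosDef.one.add_posSemidef (le_iff.mp h)
  have hsa : IsSelfAdjoint A := hA.isHermitian.isSelfAdjoint
  lift A to (Matrix n n ℝ)ˣ using hA.isUnit
  have hcont : ContinuousOn (fun x : ℝ => x⁻¹) (spectrum ℝ (A : Matrix n n ℝ)) :=
    continuousOn_inv₀.mono fun x hx => ne_of_mem_of_not_mem hx (spectrum.zero_notMem ℝ A.isUnit)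
  rw [← coe_units_inv, ← cfc_inv_id (R := ℝ) A, cfc_le_one_iff _ _ hcont]
  exact fun x hx => inv_le_one_of_one_le₀ ((CFC.one_le_iff _).mp h x hx)

lemma det_add_le_det_mul_det_one_add {A D : Matrix n n ℝ} (hA : 1 ≤ A) (hD : 0 ≤ D) :
    (A + D).det ≤ A.det * (1 + D).det := by
  have hApd : A.PosDef := by simpa using PosDef.one.add_posSemidef (le_iff.mp hA)
  set W := CFC.sqrt D
  have hWW : W * W = D := CFC.sqrt_mul_sqrt_self D hD
  have hW : IsSelfAdjoint W := (CFC.sqrt_nonneg D).isSelfAdjoint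
  have hsylvester : (A + D).det = A.det * (1 + W * A⁻¹ * W).det := calc
    (A + D).det = (A * (1 + A⁻¹ * W * W)).det := by
      rw [mul_add, mul_one, mul_assoc, mul_nonsing_inv_cancel_left _ _ hApd.det_pos.ne'.isUnit,
        hWW]
    _ = A.det * (1 + W * A⁻¹ * W).det := by
      rw [det_mul, det_one_add_mul_comm, ← mul_assoc]
  have hle : W * A⁻¹ * W ≤ D := by
    simpa [hWW] using hW.conjugate_le_conjugate (inv_le_one hA)
  rw [hsylvester]
  gcongr
  · exact hApd.det_pos.le
  · exact det_le_det (PosDef.one.add_posSemidef (nonneg_iff_posSemidef.mp hD))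
      (add_nonneg zero_le_one (hW.conjugate_nonneg hApd.inv.posSemidef.nonneg))
      (add_le_add_right hle 1)

end Matrix

theorem logdet_diff_le_logdet_sub_general {m : ℕ} (M N : Matrix (Fin m) (Fin m) ℝ)
    (hN : N.PosSemidef) (hMN : (M - N).PosSemidef) :
    Real.log ((1 + M).det) - Real.log ((1 + N).det) ≤ Real.log ((1 + (M - N)).det) := by
  have hdet : (1 + M).det ≤ (1 + N).det * (1 + (M - N)).det := by
    simpa using det_add_le_det_mul_det_one_add (le_add_of_nonneg_right hN.nonneg) hMN.nonneg
  have hposM : 0 < (1 + M).det := by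
    simpa using (PosDef.one.add_posSemidef (hN.add hMN)).det_pos
  have hposN : 0 < (1 + N).det := (PosDef.one.add_posSemidef hN).det_pos
  have hposMN : 0 < (1 + (M - N)).det := (PosDef.one.add_posSemidef hMN).det_pos
  rw [sub_le_iff_le_add', ← Real.log_mul hposN.ne' hposMN.ne']
  exact Real.log_le_log hposM hdet

theorem logdet_diff_le_logdet_sub {m : ℕ} (M N : Matrix (Fin m) (Fin m) ℝ)
    (hM : M.PosSemidef) (hN : N.PosSemidef) (hMN : (M - N).PosSemidef) :
    Real.log ((1 + M).det) - Real.log ((1 + N).det) ≤ Real.log ((1 + (M - N)).det) :=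
  logdet_diff_le_logdet_sub_general M N hN hMN
end

section
/- Let Â ∈ ℝ^{m×n}, r ∈ ℝ^m with ‖r‖₂ = β₁, and Â_k its rank-k truncated SVD, and let σ_{k+1} denote the (k+1)-st singular value of Â. Then |rᵀ(I_m + Â Âᵀ)⁻¹ r − rᵀ(I_m + Â_k Â_kᵀ)⁻¹ r| ≤ β₁² σ_{k+1}²/(1 + σ_{k+1}²). -/
open Matrix

private lemma ratio_mono' {a b : ℝ} (ha : 0 ≤ a) (hab : a ≤ b) :
    a / (1 + a) ≤ b / (1 + b) := by
  have hb : 0 ≤ b := ha.trans hab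
  rw [div_le_div_iff₀ (by linarith) (by linarith)]
  nlinarith

private lemma mul_transpose_diag {m n : ℕ} (σ : ℕ → ℝ) (P : ℕ → Prop) [DecidablePred P]
    (S : Matrix (Fin m) (Fin n) ℝ)
    (hS : ∀ i j, S i j = if (i : ℕ) = (j : ℕ) ∧ P i then σ i else 0) :
    S * Sᵀ = Matrix.diagonal (fun i : Fin m => if (i : ℕ) < n ∧ P i then σ i ^ 2 else 0) := by
  ext i j
  simp only [Matrix.mul_apply, Matrix.transpose_apply, Matrix.diagonal_apply, hS]
  by_cases hij : i = j
  · subst hij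
    simp only [if_pos rfl]
    by_cases hin : (i : ℕ) < n
    · rw [Finset.sum_eq_single (⟨(i : ℕ), hin⟩ : Fin n)]
      · simp only [Fin.val_mk]
        split_ifs with h1 h2 h2
        · ring
        · exact absurd ⟨hin, h1.2⟩ h2
        · exact absurd ⟨trivial, h2.2⟩ h1
        · ring
      · intro l _ hl
        have : (i : ℕ) ≠ (l : ℕ) := by
          intro h
          apply hl
          exact Fin.ext h.symm
        simp [this]
      · intro h
        exact absurd (Finset.mem_univ _) h
    · rw [if_neg (show ¬((i : ℕ) < n ∧ P i) from fun h => hin h.1)]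
      apply Finset.sum_eq_zero
      intro l _
      have : (i : ℕ) ≠ (l : ℕ) := fun h => hin (h ▸ l.isLt)
      simp [this]
  · rw [if_neg hij]
    apply Finset.sum_eq_zero
    intro l _
    have hij' : (i : ℕ) ≠ (j : ℕ) := fun h => hij (Fin.ext h)
    split_ifs with h1 h2 <;> try ring
    exact absurd (h1.1.trans h2.1.symm) hij'

private lemma inv_conj {m : ℕ} (U : Matrix (Fin m) (Fin m) ℝ)
    (hU : U * Uᵀ = 1) (w : Fin m → ℝ) (hw : ∀ i, w i ≠ 0) :
    (U * Matrix.diagonal w * Uᵀ)⁻¹ = U * Matrix.diagonal (fun i => (w i)⁻¹) * Uᵀ := by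
  have hU' : Uᵀ * U = 1 := mul_eq_one_comm.mp hU
  apply Matrix.inv_eq_right_inv
  calc U * Matrix.diagonal w * Uᵀ * (U * Matrix.diagonal (fun i => (w i)⁻¹) * Uᵀ)
      = U * Matrix.diagonal w * (Uᵀ * U) * Matrix.diagonal (fun i => (w i)⁻¹) * Uᵀ := by
        simp only [Matrix.mul_assoc]
    _ = U * (Matrix.diagonal w * Matrix.diagonal (fun i => (w i)⁻¹)) * Uᵀ := by
        rw [hU']; simp only [Matrix.mul_one, Matrix.mul_assoc]
    _ = 1 := by
        rw [Matrix.diagonal_mul_diagonal]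
        have : (fun i => w i * (w i)⁻¹) = fun _ => (1 : ℝ) := by
          funext i; exact mul_inv_cancel₀ (hw i)
        rw [this, Matrix.diagonal_one, Matrix.mul_one, hU]

theorem truncated_svd_quadratic_bound {m n k : ℕ}
    (U : Matrix (Fin m) (Fin m) ℝ) (V : Matrix (Fin n) (Fin n) ℝ)
    (hU : Uᵀ * U = 1) (hV : Vᵀ * V = 1)
    (σ : ℕ → ℝ) (hσ0 : ∀ i, 0 ≤ σ i) (hσdec : Antitone σ)
    (S Sk : Matrix (Fin m) (Fin n) ℝ)
    (hS : ∀ i j, S i j = if (i : ℕ) = (j : ℕ) then σ i else 0)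
    (hSk : ∀ i j, Sk i j = if (i : ℕ) = (j : ℕ) ∧ (i : ℕ) < k then σ i else 0)
    (A Ak : Matrix (Fin m) (Fin n) ℝ)
    (hA : A = U * S * Vᵀ) (hAk : Ak = U * Sk * Vᵀ)
    (r : Fin m → ℝ) (β₁ : ℝ) (hr : Real.sqrt (∑ i, r i ^ 2) = β₁) :
    |r ⬝ᵥ ((1 + A * Aᵀ)⁻¹).mulVec r - r ⬝ᵥ ((1 + Ak * Akᵀ)⁻¹).mulVec r| ≤
      β₁ ^ 2 * (σ k ^ 2 / (1 + σ k ^ 2)) := by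
  have hUUT : U * Uᵀ = 1 := mul_eq_one_comm.mp hU
  -- diagonal entries
  set f : Fin m → ℝ := fun i => if (i : ℕ) < n ∧ True then σ i ^ 2 else 0 with hf
  set g : Fin m → ℝ := fun i => if (i : ℕ) < n ∧ (i : ℕ) < k then σ i ^ 2 else 0 with hg
  have hf0 : ∀ i, 0 ≤ f i := by
    intro i; simp only [hf]; split_ifs <;> positivity
  have hg0 : ∀ i, 0 ≤ g i := by
    intro i; simp only [hg]; split_ifs <;> positivity
  have hSS : S * Sᵀ = Matrix.diagonal f := by
    apply mul_transpose_diag σ (fun _ => True)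
    intro i j; rw [hS]; simp
  have hSkSk : Sk * Skᵀ = Matrix.diagonal g := by
    apply mul_transpose_diag σ (fun x => x < k)
    intro i j; rw [hSk]
  -- A * Aᵀ
  have hAAT : A * Aᵀ = U * Matrix.diagonal f * Uᵀ := by
    rw [hA]
    calc U * S * Vᵀ * (U * S * Vᵀ)ᵀ
        = U * S * (Vᵀ * V) * Sᵀ * Uᵀ := by
          simp only [Matrix.transpose_mul, Matrix.transpose_transpose, Matrix.mul_assoc]
      _ = U * (S * Sᵀ) * Uᵀ := by rw [hV]; simp only [Matrix.mul_one, Matrix.mul_assoc]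
      _ = U * Matrix.diagonal f * Uᵀ := by rw [hSS]
  have hAkAkT : Ak * Akᵀ = U * Matrix.diagonal g * Uᵀ := by
    rw [hAk]
    calc U * Sk * Vᵀ * (U * Sk * Vᵀ)ᵀ
        = U * Sk * (Vᵀ * V) * Skᵀ * Uᵀ := by
          simp only [Matrix.transpose_mul, Matrix.transpose_transpose, Matrix.mul_assoc]
      _ = U * (Sk * Skᵀ) * Uᵀ := by rw [hV]; simp only [Matrix.mul_one, Matrix.mul_assoc]
      _ = U * Matrix.diagonal g * Uᵀ := by rw [hSkSk]
  -- 1 + A * Aᵀ as conjugated diagonal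
  have key : ∀ (w : Fin m → ℝ),
      (1 : Matrix (Fin m) (Fin m) ℝ) + U * Matrix.diagonal w * Uᵀ
        = U * Matrix.diagonal (fun i => 1 + w i) * Uᵀ := by
    intro w
    have hsplit : Matrix.diagonal (fun i => 1 + w i)
        = 1 + Matrix.diagonal w := by
      ext i j
      by_cases h : i = j <;> simp [Matrix.diagonal_apply, h, Matrix.one_apply]
    rw [hsplit, Matrix.mul_add, Matrix.add_mul, Matrix.mul_one, hUUT]
  have hinvA : (1 + A * Aᵀ)⁻¹ = U * Matrix.diagonal (fun i => (1 + f i)⁻¹) * Uᵀ := by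
    rw [hAAT, key]
    exact inv_conj U hUUT _ (fun i => by have := hf0 i; positivity)
  have hinvAk : (1 + Ak * Akᵀ)⁻¹ = U * Matrix.diagonal (fun i => (1 + g i)⁻¹) * Uᵀ := by
    rw [hAkAkT, key]
    exact inv_conj U hUUT _ (fun i => by have := hg0 i; positivity)
  -- quadratic forms
  set y : Fin m → ℝ := Uᵀ *ᵥ r with hy
  have quad : ∀ (w : Fin m → ℝ),
      r ⬝ᵥ (U * Matrix.diagonal w * Uᵀ) *ᵥ r = ∑ i, w i * y i ^ 2 := by
    intro w
    rw [← Matrix.mulVec_mulVec, ← Matrix.mulVec_mulVec, Matrix.dotProduct_mulVec r U,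
      ← Matrix.mulVec_transpose]
    simp only [← hy, dotProduct, Matrix.mulVec_diagonal]
    apply Finset.sum_congr rfl
    intro i _
    ring
  have hyy : ∑ i, y i ^ 2 = ∑ i, r i ^ 2 := by
    have : ∑ i, y i ^ 2 = y ⬝ᵥ y := by
      simp [dotProduct, pow_two]
    rw [this, hy, Matrix.dotProduct_mulVec, Matrix.vecMul_transpose,
      Matrix.mulVec_mulVec, hUUT, Matrix.one_mulVec]
    simp [dotProduct, pow_two]
  have hb : β₁ ^ 2 = ∑ i, r i ^ 2 := by
    rw [← hr, Real.sq_sqrt (by positivity)]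
  -- pointwise bound on coefficients
  set c : ℝ := σ k ^ 2 / (1 + σ k ^ 2) with hc
  have hc0 : 0 ≤ c := by positivity
  have coef : ∀ i : Fin m, |(1 + f i)⁻¹ - (1 + g i)⁻¹| ≤ c := by
    intro i
    by_cases hin : (i : ℕ) < n
    · by_cases hik : (i : ℕ) < k
      · have : f i = g i := by simp [hf, hg, hin, hik]
        rw [this, sub_self, abs_zero]; exact hc0
      · have hfi : f i = σ i ^ 2 := by simp [hf, hin]
        have hgi : g i = 0 := by simp [hg, hik]
        have hki : k ≤ (i : ℕ) := le_of_not_gt hik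
        have hσle : σ (i : ℕ) ≤ σ k := hσdec hki
        have hσ2 : σ (i : ℕ) ^ 2 ≤ σ k ^ 2 := by
          have := hσ0 (i : ℕ); have := hσ0 k; nlinarith
        rw [hfi, hgi]
        have hpos : (0:ℝ) < 1 + σ (i:ℕ) ^ 2 := by positivity
        have heq : (1 + σ (i:ℕ) ^ 2)⁻¹ - (1 + (0:ℝ))⁻¹
            = -(σ (i:ℕ) ^ 2 / (1 + σ (i:ℕ) ^ 2)) := by
          field_simp
          ring
        rw [heq, abs_neg, abs_of_nonneg (by positivity)]
        exact ratio_mono' (by positivity) hσ2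
    · have : f i = g i := by simp [hf, hg, hin]
      rw [this, sub_self, abs_zero]; exact hc0
  -- put it together
  rw [hinvA, hinvAk, quad, quad, ← Finset.sum_sub_distrib]
  calc |∑ i, ((1 + f i)⁻¹ * y i ^ 2 - (1 + g i)⁻¹ * y i ^ 2)|
      ≤ ∑ i, |(1 + f i)⁻¹ * y i ^ 2 - (1 + g i)⁻¹ * y i ^ 2| :=
        Finset.abs_sum_le_sum_abs _ _
    _ ≤ ∑ i, c * y i ^ 2 := by
        apply Finset.sum_le_sum
        intro i _
        have : (1 + f i)⁻¹ * y i ^ 2 - (1 + g i)⁻¹ * y i ^ 2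
            = ((1 + f i)⁻¹ - (1 + g i)⁻¹) * y i ^ 2 := by ring
        rw [this, abs_mul, abs_of_nonneg (by positivity : (0:ℝ) ≤ y i ^ 2)]
        exact mul_le_mul_of_nonneg_right (coef i) (by positivity)
    _ = c * ∑ i, y i ^ 2 := by rw [Finset.mul_sum]
    _ = β₁ ^ 2 * c := by rw [hyy, ← hb]; ring
end

section
/- If A and B are symmetric positive semidefinite n×n real matrices with B ⪯ A, then ‖(I + A)⁻¹ − (I + B)⁻¹‖₂ ≤ f(‖A − B‖₂), where f(x) = x/(1+x). -/
/-!
Put `t = ‖A - B‖`. In the Loewner order `1 + B ≤ 1 + A ≤ (1 + t) • 1 + B`, and inversion is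
order-reversing on positive definite matrices, so
`0 ≤ (1 + B)⁻¹ - (1 + A)⁻¹ ≤ (1 + B)⁻¹ - ((1 + t) • 1 + B)⁻¹`.
The right-hand side is a function of `B` alone, bounded by `t / (1 + t)` because
`1 / (1 + x) - 1 / (1 + t + x) ≤ t / (1 + t)` for `x ≥ 0`; and a positive matrix below `c • 1`
has norm at most `c`.
-/

open Matrix
open scoped Matrix.Norms.L2Operator
open scoped MatrixOrder ComplexOrder

section IsometricCFC

variable {A : Type*} [NormedRing A] [StarRing A] [NormedAlgebra ℝ A] [PartialOrder A]
  [StarOrderedRing A] [IsometricContinuousFunctionalCalculus ℝ A IsSelfAdjoint]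

theorem le_algebraMap_norm_of_isSelfAdjoint {a : A} (ha : IsSelfAdjoint a) :
    a ≤ algebraMap ℝ A ‖a‖ :=
  le_algebraMap_of_spectrum_le fun x hx =>
    (Real.le_norm_self x).trans (IsometricContinuousFunctionalCalculus.norm_spectrum_le a hx ha)

theorem norm_le_of_nonneg_of_le_algebraMap [NonnegSpectrumClass ℝ A] {a : A} {r : ℝ}
    (hr : 0 ≤ r) (ha : 0 ≤ a) (har : a ≤ algebraMap ℝ A r) : ‖a‖ ≤ r := by
  rw [← cfc_id' ℝ a]
  refine norm_cfc_le hr fun x hx => ?_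
  rw [Real.norm_of_nonneg (spectrum_nonneg_of_nonneg ha hx)]
  exact (le_algebraMap_iff_spectrum_le (IsSelfAdjoint.of_nonneg ha)).1 har x hx

end IsometricCFC

namespace Matrix

variable {𝕜 n : Type*} [RCLike 𝕜] [Fintype n] [DecidableEq n]

theorem PosDef.inv_le_inv {P Q : Matrix n n 𝕜} (hP : P.PosDef) (hPQ : P ≤ Q) :
    Q⁻¹ ≤ P⁻¹ := by
  rw [le_iff] at hPQ ⊢
  have hQ : Q.PosDef := by simpa using hP.add_posSemidef hPQ
  let := hQ.isUnit.invertible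
  let := hP.isUnit.invertible
  -- The two Schur complements of `fromBlocks Q 1 1 P⁻¹` are `Q - P` and `P⁻¹ - Q⁻¹`.
  have hblock := (PosDef.fromBlocks₂₂ Q 1 hP.inv).2 (by simpa using hPQ)
  simpa using (PosDef.fromBlocks₁₁ 1 P⁻¹ hQ).1 (by simpa using hblock)

theorem PosSemidef.inv_smul_one_add_eq_cfc {B : Matrix n n 𝕜} (hB : B.PosSemidef) {s : ℝ}
    (hs : 0 < s) : (s • (1 : Matrix n n 𝕜) + B)⁻¹ = cfc (fun x : ℝ => (s + x)⁻¹) B := by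
  have hBsa : IsSelfAdjoint B := hB.1
  have hspec : ∀ x ∈ spectrum ℝ B, s + x ≠ 0 := fun x hx =>
    (add_pos_of_pos_of_nonneg hs (spectrum_nonneg_of_nonneg hB.nonneg hx)).ne'
  rw [cfc_inv (fun x => s + x) B hspec, cfc_const_add s (fun x => x) B, cfc_id' ℝ B,
    nonsing_inv_eq_ringInverse, Algebra.algebraMap_eq_smul_one]

theorem PosSemidef.inv_one_add_sub_inv_le {B : Matrix n n 𝕜} (hB : B.PosSemidef) {t : ℝ}
    (ht : 0 ≤ t) : (1 + B)⁻¹ - ((1 + t) • 1 + B)⁻¹ ≤ (t / (1 + t)) • (1 : Matrix n n 𝕜) := by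
  have hBsa : IsSelfAdjoint B := hB.1
  have hcont (f : ℝ → ℝ) : ContinuousOn f (spectrum ℝ B) := B.finite_real_spectrum.continuousOn f
  rw [show (1 : Matrix n n 𝕜) + B = (1 : ℝ) • 1 + B by rw [one_smul],
    hB.inv_smul_one_add_eq_cfc one_pos, hB.inv_smul_one_add_eq_cfc (by linarith),
    ← cfc_sub (hf := hcont _) (hg := hcont _), ← Algebra.algebraMap_eq_smul_one]
  refine cfc_le_algebraMap _ _ B (fun x hx => ?_) (hcont _)
  have hx : 0 ≤ x := spectrum_nonneg_of_nonneg hB.nonneg hx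
  field_simp
  nlinarith [mul_nonneg ht hx, mul_nonneg (mul_nonneg ht ht) hx, mul_nonneg ht (mul_nonneg hx hx)]

end Matrix

theorem resolvent_diff_norm_bound {n : ℕ}
    (A B : Matrix (Fin n) (Fin n) ℝ)
    (hA : A.PosSemidef) (hB : B.PosSemidef) (hAB : (A - B).PosSemidef) :
    ‖(1 + A)⁻¹ - (1 + B)⁻¹‖ ≤ ‖A - B‖ / (1 + ‖A - B‖) := by
  set t := ‖A - B‖
  have ht : 0 ≤ t := norm_nonneg _
  have hBA : 1 + B ≤ 1 + A := by rwa [le_iff, add_sub_add_left_eq_sub]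
  have hAB' : 1 + A ≤ (1 + t) • 1 + B := by
    have hdiff : A - B ≤ t • 1 := by
      rw [← Algebra.algebraMap_eq_smul_one]
      exact le_algebraMap_norm_of_isSelfAdjoint hAB.1
    calc 1 + A = 1 + (A - B) + B := by abel
      _ ≤ 1 + t • 1 + B := by gcongr
      _ = (1 + t) • 1 + B := by rw [add_smul, one_smul]
  rw [norm_sub_rev]
  refine norm_le_of_nonneg_of_le_algebraMap (by positivity)
    (sub_nonneg.2 ((PosDef.one.add_posSemidef hB).inv_le_inv hBA)) ?_
  calc (1 + B)⁻¹ - (1 + A)⁻¹ ≤ (1 + B)⁻¹ - ((1 + t) • 1 + B)⁻¹ :=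
        sub_le_sub_left ((PosDef.one.add_posSemidef hA).inv_le_inv hAB') _
    _ ≤ (t / (1 + t)) • 1 := hB.inv_one_add_sub_inv_le ht
    _ = algebraMap ℝ _ (t / (1 + t)) := (Algebra.algebraMap_eq_smul_one _).symm
end
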